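/- Let k > 0 and a ∈ ℝ with |a| ≤ k. Then for every n ∈ ℕ, every continuous input u : [0,∞) → ℝ, every ξ = (ξ_1,…,ξ_n) ∈ ℝ^n, and every solution (x_1,…,x_n) of the linear string with b = 0 (i.e., x_i'(t) = a·x_{i−1}(t) − k·x_i(t) with x_0(t) := u(t)) and x_i(0) = ξ_i, the estimate (∫_0^t x_i(s)² ds)^{1/2} ≤ (|a|/k)·(∫_0^t u(s)² ds)^{1/2} + (1/√k)·Σ_{j=1}^{n} |ξ_j| holds for all t ≥ 0 and all i = 1,…,n. -/

import Mathlib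

/-- The `L²` norm of a real-valued signal on the interval `[0, t]`. -/
noncomputable def l2Norm (y : ℝ → ℝ) (t : ℝ) : ℝ :=
  Real.sqrt (∫ s in (0:ℝ)..t, (y s) ^ 2)

/-!
Along a solution of `y' = a x - k y` one has `(y²)' = 2 y (a x - k y) ≤ (a²/k) x² - k y²`, so integrating
over `[0, t]` gives `k ‖y‖² ≤ y(0)² + (a²/k) ‖x‖²`, i.e. `‖y‖ ≤ |y(0)|/√k + (|a|/k) ‖x‖`. Each car of the
string thus amplifies the `L²` norm of its predecessor by at most `|a|/k ≤ 1` and adds `|ξᵢ|/√k`; iterating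
this along the string from `x₀ = u` gives the estimate.
-/

open MeasureTheory Set Finset

section EnergyEstimate

variable {k a t : ℝ} {x y : ℝ → ℝ}

theorem integral_sq_le_of_hasDerivAt (hk : 0 < k) (ht : 0 ≤ t)
    (hx : ContinuousOn x (Icc 0 t))
    (hy : ∀ s ∈ Icc 0 t, HasDerivAt y (a * x s - k * y s) s) :
    ∫ s in 0..t, y s ^ 2 ≤ y 0 ^ 2 / k + (a / k) ^ 2 * ∫ s in 0..t, x s ^ 2 := by
  rw [← uIcc_of_le ht] at hx hy
  have hyc : ContinuousOn y (uIcc 0 t) := fun s hs => (hy s hs).continuousAt.continuousWithinAt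
  have hx2 : IntervalIntegrable (fun s => x s ^ 2) volume 0 t := (hx.pow 2).intervalIntegrable
  have hy2 : IntervalIntegrable (fun s => y s ^ 2) volume 0 t := (hyc.pow 2).intervalIntegrable
  have hd : IntervalIntegrable (fun s => 2 * y s * (a * x s - k * y s)) volume 0 t :=
    ((continuousOn_const.mul hyc).mul
      ((continuousOn_const.mul hx).sub (continuousOn_const.mul hyc))).intervalIntegrable
  have hftc : ∫ s in 0..t, 2 * y s * (a * x s - k * y s) = y t ^ 2 - y 0 ^ 2 := by
    refine intervalIntegral.integral_eq_sub_of_hasDerivAt (f := fun s => y s ^ 2) (fun s hs => ?_) hd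
    simpa using (hy s hs).fun_pow 2
  have hpointwise : ∀ s ∈ Icc 0 t,
      2 * y s * (a * x s - k * y s) ≤ a ^ 2 / k * x s ^ 2 - k * y s ^ 2 := by
    intro s _
    have hgap : a ^ 2 / k * x s ^ 2 - k * y s ^ 2 - 2 * y s * (a * x s - k * y s)
        = (a * x s - k * y s) ^ 2 / k := by
      field_simp
      ring
    linarith [div_nonneg (sq_nonneg (a * x s - k * y s)) hk.le]
  have hmono := intervalIntegral.integral_mono_on ht hd
    ((hx2.const_mul _).sub (hy2.const_mul _)) hpointwise
  rw [hftc, intervalIntegral.integral_sub (hx2.const_mul _) (hy2.const_mul _),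
    intervalIntegral.integral_const_mul, intervalIntegral.integral_const_mul] at hmono
  refine le_of_mul_le_mul_left ?_ hk
  have hrhs : k * (y 0 ^ 2 / k + (a / k) ^ 2 * ∫ s in 0..t, x s ^ 2)
      = y 0 ^ 2 + a ^ 2 / k * ∫ s in 0..t, x s ^ 2 := by
    field_simp
  rw [hrhs]
  linarith [sq_nonneg (y t)]

theorem l2Norm_le_of_hasDerivAt (hk : 0 < k) (ht : 0 ≤ t)
    (hx : ContinuousOn x (Icc 0 t))
    (hy : ∀ s ∈ Icc 0 t, HasDerivAt y (a * x s - k * y s) s) :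
    l2Norm y t ≤ |y 0| / √k + |a| / k * l2Norm x t := by
  have hX : 0 ≤ ∫ s in 0..t, x s ^ 2 := intervalIntegral.integral_nonneg ht fun s _ => sq_nonneg _
  have hA : 0 ≤ |y 0| / √k := by positivity
  have hB : 0 ≤ |a| / k * l2Norm x t := by unfold l2Norm; positivity
  rw [l2Norm, Real.sqrt_le_left (by positivity)]
  calc ∫ s in 0..t, y s ^ 2
      ≤ y 0 ^ 2 / k + (a / k) ^ 2 * ∫ s in 0..t, x s ^ 2 := integral_sq_le_of_hasDerivAt hk ht hx hy
    _ = (|y 0| / √k) ^ 2 + (|a| / k * l2Norm x t) ^ 2 := by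
      simp only [l2Norm, div_pow, mul_pow, sq_abs, Real.sq_sqrt hk.le, Real.sq_sqrt hX]
    _ ≤ (|y 0| / √k + |a| / k * l2Norm x t) ^ 2 := by nlinarith [mul_nonneg hA hB]

end EnergyEstimate

theorem le_mul_add_sum_Icc_of_le_add_mul {N c : ℕ → ℝ} {r : ℝ} {n : ℕ} (hr0 : 0 ≤ r)
    (hr1 : r ≤ 1) (hN0 : 0 ≤ N 0) (hc : ∀ j, 0 ≤ c j)
    (hstep : ∀ i < n, N (i + 1) ≤ c (i + 1) + r * N i) {i : ℕ} (hi : 1 ≤ i) (hin : i ≤ n) :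
    N i ≤ r * N 0 + ∑ j ∈ Icc 1 n, c j := by
  have hsum : ∀ i, 1 ≤ i → i ≤ n → N i ≤ r * N 0 + ∑ j ∈ Icc 1 i, c j := by
    intro i hi
    induction i, hi using Nat.le_induction with
    | base => exact fun hn => by simpa [add_comm] using hstep 0 hn
    | succ i hi ih =>
      intro hin
      have hS : 0 ≤ ∑ j ∈ Icc 1 i, c j := sum_nonneg fun j _ => hc j
      rw [sum_Icc_succ_top (by omega)]
      nlinarith [hstep i hin, ih (by omega), mul_le_of_le_one_left hN0 hr1,
        mul_le_of_le_one_left hS hr1]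
  calc N i ≤ r * N 0 + ∑ j ∈ Icc 1 i, c j := hsum i hi hin
    _ ≤ r * N 0 + ∑ j ∈ Icc 1 n, c j := by
      gcongr
      exact fun j _ _ => hc j

theorem linear_string_one_directional (k a : ℝ) (hk : 0 < k) (ha : |a| ≤ k) :
    ∀ n : ℕ, ∀ u : ℝ → ℝ, ContinuousOn u (Set.Ici 0) →
      ∀ ξ : ℕ → ℝ, ∀ x : ℕ → ℝ → ℝ,
        (∀ t, x 0 t = u t) →
        (∀ i, 1 ≤ i → i ≤ n → x i 0 = ξ i ∧
          ∀ t ≥ (0:ℝ), HasDerivAt (x i) (a * x (i - 1) t - k * x i t) t) →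
        ∀ i, 1 ≤ i → i ≤ n → ∀ t ≥ (0:ℝ),
          l2Norm (x i) t ≤
            (|a| / k) * l2Norm u t + (1 / Real.sqrt k) * ∑ j ∈ Finset.Icc 1 n, |ξ j| := by
  intro n u hu ξ x hxu hx i hi hin t ht
  obtain rfl : x 0 = u := funext hxu
  have hcont : ∀ i ≤ n, ContinuousOn (x i) (Icc 0 t) := by
    rintro (_ | i) hi
    · exact hu.mono Icc_subset_Ici_self
    · exact fun s hs => ((hx (i + 1) (by omega) hi).2 s hs.1).continuousAt.continuousWithinAt
  have hstep : ∀ i < n, l2Norm (x (i + 1)) t ≤ |ξ (i + 1)| / √k + |a| / k * l2Norm (x i) t := by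
    intro i hi
    obtain ⟨hξ, hder⟩ := hx (i + 1) (by omega) hi
    rw [← hξ]
    exact l2Norm_le_of_hasDerivAt hk ht (hcont i hi.le) fun s hs => by simpa using hder s hs.1
  have := le_mul_add_sum_Icc_of_le_add_mul (N := fun i => l2Norm (x i) t)
    (c := fun j => |ξ j| / √k)
    (by positivity) ((div_le_one hk).2 ha) (Real.sqrt_nonneg _) (fun j => by positivity) hstep hi hin
  simpa [mul_sum, div_eq_inv_mul] using this
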